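/- Dual attainment for cone programs: let V and W be finite-dimensional real inner product spaces, K₁ ⊆ W and K₂ ⊆ V closed convex cones, φ : V → W a linear map with adjoint φ*, and b ∈ W, C ∈ V. Suppose there exists X₀ ∈ int(K₂) with b − φ(X₀) ∈ int(K₁*), and there exists y₀ ∈ int(K₁) with φ*(y₀) − C ∈ int(K₂*). Then there exists a dual-feasible point y* (i.e., y* ∈ K₁ and φ*(y*) − C ∈ K₂*) such that ⟨b, y*⟩ = inf{⟨b, y⟩ : φ*(y) − C ∈ K₂*, y ∈ K₁}; in particular the infimum is attained. -/

import Mathlib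

/-!
Primal strict feasibility makes the dual objective coercive on the dual feasible set: if
`a = b - φ X₀` lies in the interior of `K₁*`, a whole ball around `a` does, so
`⟪y, a⟫ ≥ c ‖y‖` on `K₁` for some `c > 0`. Since
`⟪b, y⟫ = ⟪y, a⟫ + ⟪X₀, φ* y - C⟫ + ⟪X₀, C⟫` and the middle term is nonnegative for dual feasible
`y`, the objective grows at least linearly in `‖y‖`. The dual feasible set is closed and
nonempty, and `W` is finite dimensional, so the continuous objective attains its minimum there.
-/

open RealInnerProductSpace Filter

theorem exists_pos_mul_norm_le_inner_of_mem_interior_innerDual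
    {E : Type*} [NormedAddCommGroup E] [InnerProductSpace ℝ E] [CompleteSpace E]
    {s : Set E} {a : E} (ha : a ∈ interior (ProperCone.innerDual s : Set E)) :
    ∃ c > 0, ∀ y ∈ s, c * ‖y‖ ≤ ⟪y, a⟫ := by
  obtain ⟨c, hc, hball⟩ :=
    Metric.nhds_basis_closedBall.mem_iff.mp (mem_interior_iff_mem_nhds.mp ha)
  refine ⟨c, hc, fun y hy => ?_⟩
  rcases eq_or_ne y 0 with rfl | hy0
  · simp
  have hny : 0 < ‖y‖ := norm_pos_iff.mpr hy0
  have hmem : a - (c / ‖y‖) • y ∈ Metric.closedBall a c := by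
    rw [Metric.mem_closedBall, dist_eq_norm, sub_sub_cancel_left, norm_neg, norm_smul,
      Real.norm_eq_abs, abs_of_pos (div_pos hc hny), div_mul_cancel₀ _ hny.ne']
  have hdual := ProperCone.mem_innerDual.mp (hball hmem) hy
  rw [inner_sub_right, real_inner_smul_right, real_inner_self_eq_norm_sq] at hdual
  have hscale : c / ‖y‖ * ‖y‖ ^ 2 = c * ‖y‖ := by field_simp
  linarith

theorem IsClosed.exists_isMinOn_of_linear_growth
    {E : Type*} [NormedAddCommGroup E] [ProperSpace E]
    {s : Set E} {f : E → ℝ} {c d : ℝ} (hs : IsClosed s) (hne : s.Nonempty)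
    (hf : ContinuousOn f s) (hc : 0 < c) (hgrowth : ∀ y ∈ s, c * ‖y‖ + d ≤ f y) :
    ∃ x ∈ s, IsMinOn f s x := by
  obtain ⟨x₀, hx₀⟩ := hne
  refine hf.exists_isMinOn' hs hx₀ ?_
  filter_upwards
    [mem_inf_of_left (tendsto_norm_cocompact_atTop.eventually_ge_atTop ((f x₀ - d) / c)),
    mem_inf_of_right (mem_principal_self s)] with y hy hys
  have hfy := hgrowth y hys
  rw [div_le_iff₀ hc] at hy
  linarith

section ConeProgram

variable {V W : Type*}
  [NormedAddCommGroup V] [InnerProductSpace ℝ V]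
  [NormedAddCommGroup W] [InnerProductSpace ℝ W]

theorem inner_eq_add_inner_add_inner_of_adjoint {φ : V →ₗ[ℝ] W} {φadj : W →ₗ[ℝ] V}
    (hadj : ∀ x y, ⟪φ x, y⟫ = ⟪x, φadj y⟫) (b : W) (C X₀ : V) (y : W) :
    ⟪b, y⟫ = ⟪y, b - φ X₀⟫ + ⟪X₀, φadj y - C⟫ + ⟪X₀, C⟫ := by
  rw [inner_sub_right, inner_sub_right, real_inner_comm b y, real_inner_comm (φ X₀) y, hadj]
  ring

variable [CompleteSpace V]

def dualFeasibleSet (K₁ : Set W) (K₂ : Set V) (φadj : W →ₗ[ℝ] V) (C : V) : Set W :=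
  {y | y ∈ K₁ ∧ φadj y - C ∈ ProperCone.innerDual K₂}

theorem isClosed_dualFeasibleSet [FiniteDimensional ℝ W] {K₁ : Set W} (hK₁ : IsClosed K₁)
    (K₂ : Set V) (φadj : W →ₗ[ℝ] V) (C : V) : IsClosed (dualFeasibleSet K₁ K₂ φadj C) :=
  hK₁.inter ((ProperCone.innerDual K₂).isClosed.preimage
    (φadj.continuous_of_finiteDimensional.sub continuous_const))

theorem exists_linear_growth_on_dualFeasibleSet_of_primal_strictly_feasible [CompleteSpace W]
    {K₁ : Set W} {K₂ : Set V} {φ : V →ₗ[ℝ] W} {φadj : W →ₗ[ℝ] V}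
    (hadj : ∀ x y, ⟪φ x, y⟫ = ⟪x, φadj y⟫) {b : W} (C : V) {X₀ : V} (hX₀ : X₀ ∈ K₂)
    (hb : b - φ X₀ ∈ interior (ProperCone.innerDual K₁ : Set W)) :
    ∃ c > 0, ∀ y ∈ dualFeasibleSet K₁ K₂ φadj C, c * ‖y‖ + ⟪X₀, C⟫ ≤ ⟪b, y⟫ := by
  obtain ⟨c, hc, hcoer⟩ := exists_pos_mul_norm_le_inner_of_mem_interior_innerDual hb
  refine ⟨c, hc, fun y ⟨hy₁, hy₂⟩ => ?_⟩
  have hslack : 0 ≤ ⟪X₀, φadj y - C⟫ := ProperCone.mem_innerDual.mp hy₂ hX₀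
  linarith [hcoer y hy₁, inner_eq_add_inner_add_inner_of_adjoint hadj b C X₀ y]

end ConeProgram

theorem cone_program_dual_attainment_general
    {V W : Type*}
    [NormedAddCommGroup V] [InnerProductSpace ℝ V] [FiniteDimensional ℝ V]
    [NormedAddCommGroup W] [InnerProductSpace ℝ W] [FiniteDimensional ℝ W]
    (K₁ : ConvexCone ℝ W) (K₂ : ConvexCone ℝ V)
    (hK₁ : IsClosed (K₁ : Set W))
    (φ : V →ₗ[ℝ] W) (φadj : W →ₗ[ℝ] V)
    (hadj : ∀ (x : V) (y : W), ⟪φ x, y⟫ = ⟪x, φadj y⟫)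
    (b : W) (C : V)
    (hPrimalSlater : ∃ X₀ : V, X₀ ∈ interior (K₂ : Set V) ∧
      b - φ X₀ ∈ interior (ProperCone.innerDual (K₁ : Set W) : Set W))
    (hDualSlater : ∃ y₀ : W, y₀ ∈ interior (K₁ : Set W) ∧
      φadj y₀ - C ∈ interior (ProperCone.innerDual (K₂ : Set V) : Set V)) :
    ∃ ystar : W, ystar ∈ K₁ ∧ φadj ystar - C ∈ ProperCone.innerDual (K₂ : Set V) ∧
      ⟪b, ystar⟫ =
        sInf {r : ℝ | ∃ y : W, y ∈ K₁ ∧ φadj y - C ∈ ProperCone.innerDual (K₂ : Set V) ∧ r = ⟪b, y⟫} := by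
  obtain ⟨X₀, hX₀, hb⟩ := hPrimalSlater
  obtain ⟨y₀, hy₀, hy₀d⟩ := hDualSlater
  obtain ⟨c, hc, hgrowth⟩ :=
    exists_linear_growth_on_dualFeasibleSet_of_primal_strictly_feasible hadj C
      (interior_subset hX₀) hb
  obtain ⟨ystar, ⟨hys₁, hys₂⟩, hmin⟩ :=
    (isClosed_dualFeasibleSet hK₁ K₂ φadj C).exists_isMinOn_of_linear_growth
      ⟨y₀, interior_subset hy₀, interior_subset hy₀d⟩ (by fun_prop) hc hgrowth
  refine ⟨ystar, hys₁, hys₂, (IsLeast.csInf_eq ?_).symm⟩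
  refine ⟨⟨ystar, hys₁, hys₂, rfl⟩, ?_⟩
  rintro r ⟨y, hy₁, hy₂, rfl⟩
  exact hmin ⟨hy₁, hy₂⟩

/-- Dual attainment for cone programs under Slater conditions. -/
theorem cone_program_dual_attainment
    {V W : Type*}
    [NormedAddCommGroup V] [InnerProductSpace ℝ V] [FiniteDimensional ℝ V]
    [NormedAddCommGroup W] [InnerProductSpace ℝ W] [FiniteDimensional ℝ W]
    (K₁ : ConvexCone ℝ W) (K₂ : ConvexCone ℝ V)
    (hK₁ : IsClosed (K₁ : Set W)) (hK₂ : IsClosed (K₂ : Set V))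
    (φ : V →ₗ[ℝ] W) (φadj : W →ₗ[ℝ] V)
    (hadj : ∀ (x : V) (y : W), ⟪φ x, y⟫ = ⟪x, φadj y⟫)
    (b : W) (C : V)
    (hPrimalSlater : ∃ X₀ : V, X₀ ∈ interior (K₂ : Set V) ∧
      b - φ X₀ ∈ interior (ProperCone.innerDual (K₁ : Set W) : Set W))
    (hDualSlater : ∃ y₀ : W, y₀ ∈ interior (K₁ : Set W) ∧
      φadj y₀ - C ∈ interior (ProperCone.innerDual (K₂ : Set V) : Set V)) :
    ∃ ystar : W, ystar ∈ K₁ ∧ φadj ystar - C ∈ ProperCone.innerDual (K₂ : Set V) ∧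
      ⟪b, ystar⟫ =
        sInf {r : ℝ | ∃ y : W, y ∈ K₁ ∧ φadj y - C ∈ ProperCone.innerDual (K₂ : Set V) ∧ r = ⟪b, y⟫} :=
  cone_program_dual_attainment_general K₁ K₂ hK₁ φ φadj hadj b C hPrimalSlater hDualSlater
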